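/- arXiv:math/0205012 — 2 statements merged into one kernel-verified Lean document; each statement's English description precedes it below -/
import Mathlib

section
/- Let (M, g, J) be a hermitian manifold of complex dimension n and let g̃ = e^f g be a conformally equivalent hermitian metric. Then the Ricci forms ρᵇ and ρ̃ᵇ of the Bismut connections of (M, g, J) and (M, g̃, J) are related in local complex coordinates by i ρ̃ᵇ_{β̄α} = i ρᵇ_{β̄α} + (2 − n) ∂_{β̄} ∂_α f (the (1,1)-parts), and ρ̃ᵇ_{βα} = ρᵇ_{βα} (the (2,0)-parts are unchanged). -/
/-!
# Statement 16: conformal change of the Bismut Ricci form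

Let (M, g, J) be a hermitian manifold of complex dimension n and g̃ = e^f g a conformally
equivalent hermitian metric.  Then, in local complex coordinates, the Ricci forms of the
Bismut connections of g and g̃ are related by

  i ρ̃ᵇ_{β̄α} = i ρᵇ_{β̄α} + (2 − n) ∂_{β̄}∂_α f   (the (1,1)-parts),
  ρ̃ᵇ_{βα} = ρᵇ_{βα}                               (the (2,0)-parts are unchanged).

We work in a fixed local chart of complex coordinates, i.e. on ℂⁿ = `Fin n → ℂ`: the
hermitian metric is recorded by its matrix of components z ↦ (g_{αβ̄}(z)), a smooth
positive-definite hermitian matrix-valued function, and ∂, ∂̄ are the Wirtinger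
derivatives.  The Bismut Ricci form is given in these coordinates by (cf. Ivanov–
Papadopoulos)

  i ρᵇ_{β̄α} = ∂_{β̄}(g^{σγ̄}∂_σ g_{αγ̄}) − ∂_α(g^{σγ̄}∂_{β̄} g_{σγ̄}) + ∂_α(g^{σγ̄}∂_{γ̄} g_{σβ̄}),
  i ρᵇ_{βα} = (dθ)_{βα} = ∂_β θ_α − ∂_α θ_β,   θ_α = g^{βγ̄}(∂_α g_{βγ̄} − ∂_β g_{αγ̄}),

where g^{σγ̄} denotes the inverse metric, Σ_γ g^{σγ̄} g_{αγ̄} = δ_{ασ}.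
-/

noncomputable section

open scoped ComplexOrder

/-- The Wirtinger derivative ∂_α F of a function F : ℂⁿ → ℂ. -/
def wD {n : ℕ} (α : Fin n) (F : (Fin n → ℂ) → ℂ) (z : Fin n → ℂ) : ℂ :=
  (1 / 2) * (fderiv ℝ F z (Pi.single α 1) - Complex.I * fderiv ℝ F z (Pi.single α Complex.I))

/-- The conjugate Wirtinger derivative ∂_{ᾱ} F of a function F : ℂⁿ → ℂ. -/
def wDbar {n : ℕ} (α : Fin n) (F : (Fin n → ℂ) → ℂ) (z : Fin n → ℂ) : ℂ :=
  (1 / 2) * (fderiv ℝ F z (Pi.single α 1) + Complex.I * fderiv ℝ F z (Pi.single α Complex.I))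

/-- The inverse metric g^{σγ̄}, characterized by Σ_γ g^{σγ̄} g_{αγ̄} = δ_{ασ}. -/
def ginv {n : ℕ} (g : (Fin n → ℂ) → Matrix (Fin n) (Fin n) ℂ)
    (w : Fin n → ℂ) (σ γ : Fin n) : ℂ :=
  (g w)⁻¹ γ σ

/-- The (1,1)-part of the Bismut Ricci form in local complex coordinates:
i ρᵇ_{β̄α} = ∂_{β̄}(g^{σγ̄}∂_σ g_{αγ̄}) − ∂_α(g^{σγ̄}∂_{β̄} g_{σγ̄}) + ∂_α(g^{σγ̄}∂_{γ̄} g_{σβ̄}). -/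
def bismutRicci11 {n : ℕ} (g : (Fin n → ℂ) → Matrix (Fin n) (Fin n) ℂ)
    (β α : Fin n) (z : Fin n → ℂ) : ℂ :=
  wDbar β (fun w => ∑ σ, ∑ γ, ginv g w σ γ * wD σ (fun u => g u α γ) w) z -
    wD α (fun w => ∑ σ, ∑ γ, ginv g w σ γ * wDbar β (fun u => g u σ γ) w) z +
    wD α (fun w => ∑ σ, ∑ γ, ginv g w σ γ * wDbar γ (fun u => g u σ β) w) z

/-- The Lee form θ_α = g^{βγ̄}(∂_α g_{βγ̄} − ∂_β g_{αγ̄}) in local complex coordinates. -/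
def leeForm {n : ℕ} (g : (Fin n → ℂ) → Matrix (Fin n) (Fin n) ℂ)
    (α : Fin n) (w : Fin n → ℂ) : ℂ :=
  ∑ β, ∑ γ, ginv g w β γ * (wD α (fun u => g u β γ) w - wD β (fun u => g u α γ) w)

/-- The (2,0)-part of the Bismut Ricci form in local complex coordinates:
i ρᵇ_{βα} = (dθ)_{βα} = ∂_β θ_α − ∂_α θ_β. -/
def bismutRicci20 {n : ℕ} (g : (Fin n → ℂ) → Matrix (Fin n) (Fin n) ℂ)
    (β α : Fin n) (z : Fin n → ℂ) : ℂ :=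
  wD β (leeForm g α) z - wD α (leeForm g β) z

namespace BismutAux

variable {n : ℕ} {F G : (Fin n → ℂ) → ℂ} {z : Fin n → ℂ} {α β : Fin n}

lemma contDiff_fderiv_apply (hF : ContDiff ℝ (⊤ : ℕ∞) F) (v : Fin n → ℂ) :
    ContDiff ℝ (⊤ : ℕ∞) fun w => fderiv ℝ F w v :=
  (hF.fderiv_right (by simp)).clm_apply contDiff_const

lemma contDiff_wD (hF : ContDiff ℝ (⊤ : ℕ∞) F) : ContDiff ℝ (⊤ : ℕ∞) (wD α F) := by
  unfold wD
  exact contDiff_const.mul ((contDiff_fderiv_apply hF _).sub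
    (contDiff_const.mul (contDiff_fderiv_apply hF _)))

lemma contDiff_wDbar (hF : ContDiff ℝ (⊤ : ℕ∞) F) : ContDiff ℝ (⊤ : ℕ∞) (wDbar α F) := by
  unfold wDbar
  exact contDiff_const.mul ((contDiff_fderiv_apply hF _).add
    (contDiff_const.mul (contDiff_fderiv_apply hF _)))

lemma wD_add (hF : DifferentiableAt ℝ F z) (hG : DifferentiableAt ℝ G z) :
    wD α (fun w => F w + G w) z = wD α F z + wD α G z := by
  unfold wD
  rw [fderiv_fun_add hF hG]
  simp only [ContinuousLinearMap.add_apply]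
  ring

lemma wDbar_add (hF : DifferentiableAt ℝ F z) (hG : DifferentiableAt ℝ G z) :
    wDbar α (fun w => F w + G w) z = wDbar α F z + wDbar α G z := by
  unfold wDbar
  rw [fderiv_fun_add hF hG]
  simp only [ContinuousLinearMap.add_apply]
  ring

lemma wD_mul (hF : DifferentiableAt ℝ F z) (hG : DifferentiableAt ℝ G z) :
    wD α (fun w => F w * G w) z = wD α F z * G z + F z * wD α G z := by
  unfold wD
  rw [fderiv_fun_mul hF hG]
  simp only [ContinuousLinearMap.add_apply, ContinuousLinearMap.smul_apply, smul_eq_mul]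
  ring

lemma wDbar_mul (hF : DifferentiableAt ℝ F z) (hG : DifferentiableAt ℝ G z) :
    wDbar α (fun w => F w * G w) z = wDbar α F z * G z + F z * wDbar α G z := by
  unfold wDbar
  rw [fderiv_fun_mul hF hG]
  simp only [ContinuousLinearMap.add_apply, ContinuousLinearMap.smul_apply, smul_eq_mul]
  ring

lemma wD_const_mul (hG : DifferentiableAt ℝ G z) (c : ℂ) :
    wD α (fun w => c * G w) z = c * wD α G z := by
  unfold wD
  rw [fderiv_const_mul hG]
  simp only [ContinuousLinearMap.smul_apply, smul_eq_mul]
  ring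

lemma wD_exp (hF : DifferentiableAt ℝ F z) :
    wD α (fun w => Complex.exp (F w)) z = Complex.exp (F z) * wD α F z := by
  have h : fderiv ℝ (fun w => Complex.exp (F w)) z = Complex.exp (F z) • fderiv ℝ F z :=
    ((Complex.hasDerivAt_exp (F z)).comp_hasFDerivAt z hF.hasFDerivAt).fderiv
  unfold wD
  rw [h]
  simp only [ContinuousLinearMap.smul_apply, smul_eq_mul]
  ring

lemma wDbar_exp (hF : DifferentiableAt ℝ F z) :
    wDbar α (fun w => Complex.exp (F w)) z = Complex.exp (F z) * wDbar α F z := by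
  have h : fderiv ℝ (fun w => Complex.exp (F w)) z = Complex.exp (F z) • fderiv ℝ F z :=
    ((Complex.hasDerivAt_exp (F z)).comp_hasFDerivAt z hF.hasFDerivAt).fderiv
  unfold wDbar
  rw [h]
  simp only [ContinuousLinearMap.smul_apply, smul_eq_mul]
  ring

lemma fderiv_fderiv_apply (hF : ContDiff ℝ (⊤ : ℕ∞) F) (z u v : Fin n → ℂ) :
    fderiv ℝ (fun w => fderiv ℝ F w v) z u = fderiv ℝ (fderiv ℝ F) z u v := by
  have h1 : DifferentiableAt ℝ (fderiv ℝ F) z :=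
    ((hF.fderiv_right (m := 1) (by exact WithTop.coe_le_coe.mpr le_top)).differentiable (by simp)) z
  have h2 := ((ContinuousLinearMap.apply ℝ ℂ v).hasFDerivAt.comp z h1.hasFDerivAt).fderiv
  have h3 : (fun w => fderiv ℝ F w v)
      = (ContinuousLinearMap.apply ℝ ℂ v) ∘ (fderiv ℝ F) := rfl
  rw [h3, h2]
  rfl

lemma snd_symm (hF : ContDiff ℝ (⊤ : ℕ∞) F) (z u v : Fin n → ℂ) :
    fderiv ℝ (fun w => fderiv ℝ F w v) z u = fderiv ℝ (fun w => fderiv ℝ F w u) z v := by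
  rw [fderiv_fderiv_apply hF, fderiv_fderiv_apply hF]
  exact second_derivative_symmetric
    (fun y => ((hF.differentiable (by simp)) y).hasFDerivAt)
    (((hF.fderiv_right (m := 1) (by exact WithTop.coe_le_coe.mpr le_top)).differentiable (by simp)) z).hasFDerivAt u v

lemma fderiv_wD_apply (hF : ContDiff ℝ (⊤ : ℕ∞) F) (α : Fin n) (z u : Fin n → ℂ) :
    fderiv ℝ (wD α F) z u =
      (1/2) * (fderiv ℝ (fun w => fderiv ℝ F w (Pi.single α 1)) z u
        - Complex.I * fderiv ℝ (fun w => fderiv ℝ F w (Pi.single α Complex.I)) z u) := by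
  have hA : DifferentiableAt ℝ (fun w => fderiv ℝ F w (Pi.single α 1)) z :=
    ((contDiff_fderiv_apply hF _).differentiable (by simp)) z
  have hB : DifferentiableAt ℝ (fun w => fderiv ℝ F w (Pi.single α Complex.I)) z :=
    ((contDiff_fderiv_apply hF _).differentiable (by simp)) z
  unfold wD
  rw [fderiv_const_mul (hA.fun_sub (hB.const_mul _)), fderiv_fun_sub hA (hB.const_mul _),
    fderiv_const_mul hB]
  simp only [ContinuousLinearMap.smul_apply, ContinuousLinearMap.sub_apply, smul_eq_mul]

lemma fderiv_wDbar_apply (hF : ContDiff ℝ (⊤ : ℕ∞) F) (β : Fin n) (z u : Fin n → ℂ) :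
    fderiv ℝ (wDbar β F) z u =
      (1/2) * (fderiv ℝ (fun w => fderiv ℝ F w (Pi.single β 1)) z u
        + Complex.I * fderiv ℝ (fun w => fderiv ℝ F w (Pi.single β Complex.I)) z u) := by
  have hA : DifferentiableAt ℝ (fun w => fderiv ℝ F w (Pi.single β 1)) z :=
    ((contDiff_fderiv_apply hF _).differentiable (by simp)) z
  have hB : DifferentiableAt ℝ (fun w => fderiv ℝ F w (Pi.single β Complex.I)) z :=
    ((contDiff_fderiv_apply hF _).differentiable (by simp)) z
  unfold wDbar
  rw [fderiv_const_mul (hA.fun_add (hB.const_mul _)), fderiv_fun_add hA (hB.const_mul _),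
    fderiv_const_mul hB]
  simp only [ContinuousLinearMap.smul_apply, ContinuousLinearMap.add_apply, smul_eq_mul]

lemma wD_wDbar_comm (hF : ContDiff ℝ (⊤ : ℕ∞) F) : wD α (wDbar β F) z = wDbar β (wD α F) z := by
  have e1 : wD α (wDbar β F) z = (1/2) * (fderiv ℝ (wDbar β F) z (Pi.single α 1)
      - Complex.I * fderiv ℝ (wDbar β F) z (Pi.single α Complex.I)) := rfl
  have e2 : wDbar β (wD α F) z = (1/2) * (fderiv ℝ (wD α F) z (Pi.single β 1)
      + Complex.I * fderiv ℝ (wD α F) z (Pi.single β Complex.I)) := rfl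
  rw [e1, e2, fderiv_wDbar_apply hF, fderiv_wDbar_apply hF, fderiv_wD_apply hF,
    fderiv_wD_apply hF,
    snd_symm hF z (Pi.single α 1) (Pi.single β 1),
    snd_symm hF z (Pi.single α 1) (Pi.single β Complex.I),
    snd_symm hF z (Pi.single α Complex.I) (Pi.single β 1),
    snd_symm hF z (Pi.single α Complex.I) (Pi.single β Complex.I)]
  ring

lemma wD_wD_comm (hF : ContDiff ℝ (⊤ : ℕ∞) F) : wD α (wD β F) z = wD β (wD α F) z := by
  have e1 : wD α (wD β F) z = (1/2) * (fderiv ℝ (wD β F) z (Pi.single α 1)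
      - Complex.I * fderiv ℝ (wD β F) z (Pi.single α Complex.I)) := rfl
  have e2 : wD β (wD α F) z = (1/2) * (fderiv ℝ (wD α F) z (Pi.single β 1)
      - Complex.I * fderiv ℝ (wD α F) z (Pi.single β Complex.I)) := rfl
  rw [e1, e2, fderiv_wD_apply hF, fderiv_wD_apply hF, fderiv_wD_apply hF,
    fderiv_wD_apply hF,
    snd_symm hF z (Pi.single α 1) (Pi.single β 1),
    snd_symm hF z (Pi.single α 1) (Pi.single β Complex.I),
    snd_symm hF z (Pi.single α Complex.I) (Pi.single β 1),
    snd_symm hF z (Pi.single α Complex.I) (Pi.single β Complex.I)]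
  ring

section MatrixPart

variable {g : (Fin n → ℂ) → Matrix (Fin n) (Fin n) ℂ}

lemma contDiff_prod {ι : Type*} (s : Finset ι) (A : ι → (Fin n → ℂ) → ℂ)
    (h : ∀ i, ContDiff ℝ (⊤ : ℕ∞) (A i)) : ContDiff ℝ (⊤ : ℕ∞) fun w => ∏ i ∈ s, A i w := by
  classical
  induction s using Finset.induction with
  | empty => simpa using contDiff_const
  | insert _ _ hx ih =>
    simp only [Finset.prod_insert hx]
    exact (h _).mul ih

lemma contDiff_det {M : (Fin n → ℂ) → Matrix (Fin n) (Fin n) ℂ}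
    (h : ∀ i j, ContDiff ℝ (⊤ : ℕ∞) fun w => M w i j) :
    ContDiff ℝ (⊤ : ℕ∞) fun w => (M w).det := by
  simp only [Matrix.det_apply']
  exact ContDiff.sum fun σ _ => contDiff_const.mul (contDiff_prod _ _ fun i => h (σ i) i)

lemma contDiff_adjugate (h : ∀ i j, ContDiff ℝ (⊤ : ℕ∞) fun w => g w i j) (i j : Fin n) :
    ContDiff ℝ (⊤ : ℕ∞) fun w => (g w).adjugate i j := by
  simp only [Matrix.adjugate_apply]
  apply contDiff_det
  intro k l
  by_cases hk : k = j
  · simp only [Matrix.updateRow_apply, hk, if_pos rfl]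
    exact contDiff_const
  · simp only [Matrix.updateRow_apply, if_neg hk]
    exact h k l

lemma contDiff_ginv (h : ∀ i j, ContDiff ℝ (⊤ : ℕ∞) fun w => g w i j)
    (hpd : ∀ z, (g z).PosDef) (σ γ : Fin n) :
    ContDiff ℝ (⊤ : ℕ∞) fun w => ginv g w σ γ := by
  have he : (fun w => ginv g w σ γ) = fun w => ((g w).det)⁻¹ * (g w).adjugate γ σ := by
    funext w
    simp [ginv, Matrix.inv_def, Ring.inverse_eq_inv', Matrix.smul_apply, smul_eq_mul]
  rw [he]
  exact ((contDiff_det h).inv fun w => (hpd w).det_pos.ne').mul (contDiff_adjugate h γ σ)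

lemma ginv_mul_right (hpd : ∀ z, (g z).PosDef) (w : Fin n → ℂ) (α σ : Fin n) :
    ∑ γ, ginv g w σ γ * g w α γ = if α = σ then 1 else 0 := by
  have h := Matrix.mul_nonsing_inv (g w) (hpd w).det_pos.ne'.isUnit
  have h2 := congrFun (congrFun h α) σ
  rw [Matrix.mul_apply] at h2
  simp only [Matrix.one_apply] at h2
  rw [← h2]
  exact Finset.sum_congr rfl fun γ _ => by simp [ginv, mul_comm]

lemma ginv_mul_left (hpd : ∀ z, (g z).PosDef) (w : Fin n → ℂ) (γ β : Fin n) :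
    ∑ σ, ginv g w σ γ * g w σ β = if γ = β then 1 else 0 := by
  have h := Matrix.nonsing_inv_mul (g w) (hpd w).det_pos.ne'.isUnit
  have h2 := congrFun (congrFun h γ) β
  rw [Matrix.mul_apply] at h2
  simp only [Matrix.one_apply] at h2
  rw [← h2]
  exact Finset.sum_congr rfl fun σ _ => by simp [ginv]

lemma ginv_trace (hpd : ∀ z, (g z).PosDef) (w : Fin n → ℂ) :
    ∑ σ, ∑ γ, ginv g w σ γ * g w σ γ = (n : ℂ) := by
  have h : ∀ σ : Fin n, ∑ γ, ginv g w σ γ * g w σ γ = 1 := by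
    intro σ
    rw [ginv_mul_right hpd w σ σ]
    simp
  simp [h]

lemma ginv_conformal (hpd : ∀ z, (g z).PosDef) (f : (Fin n → ℂ) → ℝ) (w : Fin n → ℂ)
    (σ γ : Fin n) :
    ginv (fun u => Complex.exp (f u) • g u) w σ γ = (Complex.exp (f w))⁻¹ * ginv g w σ γ := by
  unfold ginv
  have h : (Complex.exp (f w) • g w)⁻¹ = (Complex.exp (f w))⁻¹ • (g w)⁻¹ := by
    apply Matrix.inv_eq_right_inv
    rw [Matrix.smul_mul, Matrix.mul_smul, smul_smul,
      mul_inv_cancel₀ (Complex.exp_ne_zero _), one_smul,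
      Matrix.mul_nonsing_inv (g w) (hpd w).det_pos.ne'.isUnit]
  simp [h, Matrix.smul_apply, smul_eq_mul]

end MatrixPart

end BismutAux

set_option maxHeartbeats 2000000

open BismutAux

/-- Let g be a hermitian metric on a complex n-manifold, written in a
local chart of complex coordinates as a smooth positive-definite hermitian matrix of
components g_{αβ̄}, and let g̃ = e^f g be a conformally equivalent hermitian metric.  Then
the Bismut Ricci forms are related by

  i ρ̃ᵇ_{β̄α} = i ρᵇ_{β̄α} + (2 − n) ∂_{β̄}∂_α f    and    ρ̃ᵇ_{βα} = ρᵇ_{βα}. -/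
theorem bismut_ricci_conformal_change (n : ℕ) (hn : 1 ≤ n)
    (g : (Fin n → ℂ) → Matrix (Fin n) (Fin n) ℂ)
    (f : (Fin n → ℂ) → ℝ)
    (hg_smooth : ∀ α β : Fin n, ContDiff ℝ (⊤ : ℕ∞) fun z => g z α β)
    (hf_smooth : ContDiff ℝ (⊤ : ℕ∞) f)
    (hg_posdef : ∀ z, (g z).PosDef) :
    ∀ (z : Fin n → ℂ) (β α : Fin n),
      (bismutRicci11 (fun w => Complex.exp (f w) • g w) β α z =
        bismutRicci11 g β α z +
          ((2 : ℂ) - (n : ℂ)) * wDbar β (fun w => wD α (fun u => (f u : ℂ)) w) z) ∧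
      bismutRicci20 (fun w => Complex.exp (f w) • g w) β α z =
        bismutRicci20 g β α z := by
  classical
  intro z β α
  have hfC : ContDiff ℝ (⊤ : ℕ∞) fun u => ((f u : ℝ) : ℂ) := Complex.ofRealCLM.contDiff.comp hf_smooth
  have hE : ContDiff ℝ (⊤ : ℕ∞) fun u => Complex.exp ((f u : ℝ) : ℂ) := hfC.cexp
  have hginv : ∀ σ γ : Fin n, ContDiff ℝ (⊤ : ℕ∞) fun w => ginv g w σ γ := fun σ γ =>
    contDiff_ginv hg_smooth hg_posdef σ γ
  -- generic pointwise identity for entries of the conformal metric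
  have hent : ∀ (δ : Fin n) (σ γ : Fin n) (w : Fin n → ℂ),
      wD δ (fun u => (Complex.exp (f u) • g u) σ γ) w
        = Complex.exp ((f w : ℝ) : ℂ) *
            (wD δ (fun u => ((f u : ℝ) : ℂ)) w * g w σ γ + wD δ (fun u => g u σ γ) w) := by
    intro δ σ γ w
    have he : (fun u => (Complex.exp (f u) • g u) σ γ)
        = fun u => Complex.exp ((f u : ℝ) : ℂ) * g u σ γ := by
      funext u
      simp [Matrix.smul_apply, smul_eq_mul]
    rw [he, wD_mul ((hE.differentiable (by simp)) w) (((hg_smooth σ γ).differentiable (by simp)) w),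
      wD_exp ((hfC.differentiable (by simp)) w)]
    ring
  have hentbar : ∀ (δ : Fin n) (σ γ : Fin n) (w : Fin n → ℂ),
      wDbar δ (fun u => (Complex.exp (f u) • g u) σ γ) w
        = Complex.exp ((f w : ℝ) : ℂ) *
            (wDbar δ (fun u => ((f u : ℝ) : ℂ)) w * g w σ γ + wDbar δ (fun u => g u σ γ) w) := by
    intro δ σ γ w
    have he : (fun u => (Complex.exp (f u) • g u) σ γ)
        = fun u => Complex.exp ((f u : ℝ) : ℂ) * g u σ γ := by
      funext u
      simp [Matrix.smul_apply, smul_eq_mul]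
    rw [he, wDbar_mul ((hE.differentiable (by simp)) w) (((hg_smooth σ γ).differentiable (by simp)) w),
      wDbar_exp ((hfC.differentiable (by simp)) w)]
    ring
  have hexpne : ∀ w : Fin n → ℂ, Complex.exp ((f w : ℝ) : ℂ) ≠ 0 := fun w =>
    Complex.exp_ne_zero _
  constructor
  · -- (1,1)-part
    have h1 : (fun w => ∑ σ, ∑ γ, ginv (fun w => Complex.exp (f w) • g w) w σ γ *
          wD σ (fun u => (Complex.exp (f u) • g u) α γ) w)
        = fun w => (∑ σ, ∑ γ, ginv g w σ γ * wD σ (fun u => g u α γ) w)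
            + wD α (fun u => ((f u : ℝ) : ℂ)) w := by
      funext w
      have hterm : ∀ σ γ : Fin n,
          ginv (fun w => Complex.exp (f w) • g w) w σ γ *
            wD σ (fun u => (Complex.exp (f u) • g u) α γ) w
          = ginv g w σ γ * wD σ (fun u => g u α γ) w
            + wD σ (fun u => ((f u : ℝ) : ℂ)) w * (ginv g w σ γ * g w α γ) := by
        intro σ γ
        rw [ginv_conformal hg_posdef f w σ γ, hent σ α γ w, mul_mul_mul_comm,
          inv_mul_cancel₀ (hexpne w), one_mul]
        ring
      simp only [hterm, Finset.sum_add_distrib]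
      congr 1
      have h2 : ∀ σ : Fin n,
          ∑ γ, wD σ (fun u => ((f u : ℝ) : ℂ)) w * (ginv g w σ γ * g w α γ)
            = wD σ (fun u => ((f u : ℝ) : ℂ)) w * (if α = σ then 1 else 0) := by
        intro σ
        rw [← Finset.mul_sum, ginv_mul_right hg_posdef w α σ]
      simp only [h2, mul_ite, mul_one, mul_zero]
      simp
    have h2 : (fun w => ∑ σ, ∑ γ, ginv (fun w => Complex.exp (f w) • g w) w σ γ *
          wDbar β (fun u => (Complex.exp (f u) • g u) σ γ) w)
        = fun w => (∑ σ, ∑ γ, ginv g w σ γ * wDbar β (fun u => g u σ γ) w)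
            + (n : ℂ) * wDbar β (fun u => ((f u : ℝ) : ℂ)) w := by
      funext w
      have hterm : ∀ σ γ : Fin n,
          ginv (fun w => Complex.exp (f w) • g w) w σ γ *
            wDbar β (fun u => (Complex.exp (f u) • g u) σ γ) w
          = ginv g w σ γ * wDbar β (fun u => g u σ γ) w
            + wDbar β (fun u => ((f u : ℝ) : ℂ)) w * (ginv g w σ γ * g w σ γ) := by
        intro σ γ
        rw [ginv_conformal hg_posdef f w σ γ, hentbar β σ γ w, mul_mul_mul_comm,
          inv_mul_cancel₀ (hexpne w), one_mul]
        ring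
      simp only [hterm, Finset.sum_add_distrib]
      congr 1
      simp only [← Finset.mul_sum]
      rw [ginv_trace hg_posdef w]
      ring
    have h3 : (fun w => ∑ σ, ∑ γ, ginv (fun w => Complex.exp (f w) • g w) w σ γ *
          wDbar γ (fun u => (Complex.exp (f u) • g u) σ β) w)
        = fun w => (∑ σ, ∑ γ, ginv g w σ γ * wDbar γ (fun u => g u σ β) w)
            + wDbar β (fun u => ((f u : ℝ) : ℂ)) w := by
      funext w
      have hterm : ∀ σ γ : Fin n,
          ginv (fun w => Complex.exp (f w) • g w) w σ γ *
            wDbar γ (fun u => (Complex.exp (f u) • g u) σ β) w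
          = ginv g w σ γ * wDbar γ (fun u => g u σ β) w
            + wDbar γ (fun u => ((f u : ℝ) : ℂ)) w * (ginv g w σ γ * g w σ β) := by
        intro σ γ
        rw [ginv_conformal hg_posdef f w σ γ, hentbar γ σ β w, mul_mul_mul_comm,
          inv_mul_cancel₀ (hexpne w), one_mul]
        ring
      simp only [hterm, Finset.sum_add_distrib]
      congr 1
      rw [Finset.sum_comm]
      have h4 : ∀ γ0 : Fin n,
          ∑ σ, wDbar γ0 (fun u => ((f u : ℝ) : ℂ)) w * (ginv g w σ γ0 * g w σ β)
            = wDbar γ0 (fun u => ((f u : ℝ) : ℂ)) w * (if γ0 = β then 1 else 0) := by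
        intro γ0
        rw [← Finset.mul_sum, ginv_mul_left hg_posdef w γ0 β]
      simp only [h4, mul_ite, mul_one, mul_zero]
      simp
    have hold1 : ContDiff ℝ (⊤ : ℕ∞) fun w => ∑ σ, ∑ γ, ginv g w σ γ * wD σ (fun u => g u α γ) w :=
      ContDiff.sum fun σ _ => ContDiff.sum fun γ _ =>
        (hginv σ γ).mul (contDiff_wD (hg_smooth α γ))
    have hold2 : ContDiff ℝ (⊤ : ℕ∞) fun w => ∑ σ, ∑ γ, ginv g w σ γ *
        wDbar β (fun u => g u σ γ) w :=
      ContDiff.sum fun σ _ => ContDiff.sum fun γ _ =>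
        (hginv σ γ).mul (contDiff_wDbar (hg_smooth σ γ))
    have hold3 : ContDiff ℝ (⊤ : ℕ∞) fun w => ∑ σ, ∑ γ, ginv g w σ γ *
        wDbar γ (fun u => g u σ β) w :=
      ContDiff.sum fun σ _ => ContDiff.sum fun γ _ =>
        (hginv σ γ).mul (contDiff_wDbar (hg_smooth σ β))
    simp only [bismutRicci11]
    rw [h1, h2, h3,
      wDbar_add ((hold1.differentiable (by simp)) z) (((contDiff_wD hfC).differentiable (by simp)) z),
      wD_add ((hold2.differentiable (by simp)) z)
        (((contDiff_const.mul (contDiff_wDbar hfC)).differentiable (by simp)) z),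
      wD_add ((hold3.differentiable (by simp)) z)
        (((contDiff_wDbar hfC).differentiable (by simp)) z),
      wD_const_mul (((contDiff_wDbar hfC).differentiable (by simp)) z) ((n : ℂ)),
      wD_wDbar_comm hfC]
    have heta : wDbar β (fun w => wD α (fun u => ((f u : ℝ) : ℂ)) w) z
        = wDbar β (wD α (fun u => ((f u : ℝ) : ℂ))) z := rfl
    rw [heta]
    ring
  · -- (2,0)-part
    have hlee : ∀ δ : Fin n, leeForm (fun w => Complex.exp (f w) • g w) δ
        = fun w => leeForm g δ w + ((n : ℂ) - 1) * wD δ (fun u => ((f u : ℝ) : ℂ)) w := by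
      intro δ
      funext w
      simp only [leeForm]
      have hterm : ∀ b γ : Fin n,
          ginv (fun w => Complex.exp (f w) • g w) w b γ *
            (wD δ (fun u => (Complex.exp (f u) • g u) b γ) w
              - wD b (fun u => (Complex.exp (f u) • g u) δ γ) w)
          = ginv g w b γ * (wD δ (fun u => g u b γ) w - wD b (fun u => g u δ γ) w)
            + (wD δ (fun u => ((f u : ℝ) : ℂ)) w * (ginv g w b γ * g w b γ)
              - wD b (fun u => ((f u : ℝ) : ℂ)) w * (ginv g w b γ * g w δ γ)) := by
        intro b γ
        rw [ginv_conformal hg_posdef f w b γ, hent δ b γ w, hent b δ γ w, ← mul_sub,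
          mul_mul_mul_comm, inv_mul_cancel₀ (hexpne w), one_mul]
        ring
      simp only [hterm, Finset.sum_add_distrib, Finset.sum_sub_distrib]
      congr 1
      have hP : ∑ b : Fin n, ∑ γ : Fin n,
          wD δ (fun u => ((f u : ℝ) : ℂ)) w * (ginv g w b γ * g w b γ)
            = wD δ (fun u => ((f u : ℝ) : ℂ)) w * (n : ℂ) := by
        simp only [← Finset.mul_sum]
        rw [ginv_trace hg_posdef w]
      have hQ : ∑ b : Fin n, ∑ γ : Fin n,
          wD b (fun u => ((f u : ℝ) : ℂ)) w * (ginv g w b γ * g w δ γ)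
            = wD δ (fun u => ((f u : ℝ) : ℂ)) w := by
        have h4 : ∀ b : Fin n,
            ∑ γ, wD b (fun u => ((f u : ℝ) : ℂ)) w * (ginv g w b γ * g w δ γ)
              = wD b (fun u => ((f u : ℝ) : ℂ)) w * (if δ = b then 1 else 0) := by
          intro b
          rw [← Finset.mul_sum, ginv_mul_right hg_posdef w δ b]
        simp only [h4, mul_ite, mul_one, mul_zero]
        simp
      rw [hP, hQ]
      ring
    have hleeSm : ∀ δ : Fin n, ContDiff ℝ (⊤ : ℕ∞) (leeForm g δ) := by
      intro δ
      unfold leeForm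
      exact ContDiff.sum fun b _ => ContDiff.sum fun γ _ =>
        (hginv b γ).mul ((contDiff_wD (hg_smooth b γ)).sub (contDiff_wD (hg_smooth δ γ)))
    simp only [bismutRicci20]
    rw [hlee α, hlee β,
      wD_add (((hleeSm α).differentiable (by simp)) z)
        (((contDiff_const.mul (contDiff_wD hfC)).differentiable (by simp)) z),
      wD_add (((hleeSm β).differentiable (by simp)) z)
        (((contDiff_const.mul (contDiff_wD hfC)).differentiable (by simp)) z),
      wD_const_mul (((contDiff_wD hfC).differentiable (by simp)) z) ((n : ℂ) - 1),
      wD_const_mul (((contDiff_wD hfC).differentiable (by simp)) z) ((n : ℂ) - 1),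
      wD_wD_comm hfC]
    ring
end
end

section
/- Let (M, J) be a 2n-dimensional compact complex non-Kähler manifold with vanishing first Chern class c₁(M, J) = 0, with n ≥ 3, satisfying the ∂∂̄-lemma, and suppose there exists a hermitian metric g compatible with J whose Lee form θ has dθ of type (1,1). Then there exists a conformally equivalent hermitian metric ḡ = e^f g, unique up to homothety, such that the restricted holonomy of the Bismut connection of (M, ḡ, J) is contained in SU(n) (equivalently, its Bismut Ricci form vanishes). -/
/-!
With dθ of type (1,1) the Bismut Ricci form ρᵇ is an exact (1,1)-form, since it represents
2πc₁ = 0, so the ∂∂̄-lemma writes it as i∂∂̄h. A conformal change by e^f adds (2 − n)·i∂∂̄f,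
and for n ≠ 2 this kills ρᵇ exactly when i∂∂̄f = i∂∂̄(h / (n − 2)); as i∂∂̄ only annihilates
constants, f is determined up to an additive constant.
-/

/-- Abstract presentation of the hermitian geometry (with Bismut connections) of a fixed
compact connected complex manifold (M, J) of complex dimension n. -/
structure HermitianGeometryB where
  /-- the points of the complex manifold (M, J) -/
  M : Type
  instTop : TopologicalSpace M
  /-- M is compact -/
  instCompact : CompactSpace M
  /-- the complex dimension n of M -/
  n : ℕ
  /-- hermitian metrics on M compatible with J -/
  Metric : Type
  metric_nonempty : Nonempty Metric
  /-- smooth real 2-forms on M -/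
  Form2 : Type
  instAdd : AddCommGroup Form2
  instMod : Module ℝ Form2
  /-- the operator f ↦ i∂∂̄f on smooth real functions -/
  ddbar : (M → ℝ) →ₗ[ℝ] Form2
  /-- ω is d-exact -/
  IsExact : Form2 → Prop
  /-- ω is of type (1,1) with respect to J -/
  IsType11 : Form2 → Prop
  /-- i∂∂̄f is an exact (1,1)-form -/
  ddbar_exact : ∀ f, IsExact (ddbar f)
  ddbar_type11 : ∀ f, IsType11 (ddbar f)
  /-- on the compact M, the equation g^{β̄α}∂_{β̄}∂_α f = 0 has only constant solutions;
  in particular i∂∂̄f = 0 forces f to be constant -/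
  ddbar_ker_const : ∀ f : M → ℝ, ddbar f = 0 → ∃ c : ℝ, f = fun _ => c
  /-- conformal rescaling: (g, f) ↦ e^f g -/
  conformal : Metric → (M → ℝ) → Metric
  /-- the Ricci form ρᵇ of the Bismut connection of g (the unique hermitian connection
  with totally skew-symmetric torsion) -/
  bismutRicci : Metric → Form2
  /-- ρᵇ represents 2π c₁(M, J); `c1Zero` says the first Chern class vanishes -/
  c1Zero : Prop
  c1Zero_iff_bismut_exact : ∀ g, c1Zero ↔ IsExact (bismutRicci g)
  /-- the (2,0)+(0,2) component of dθ_g, where θ_g = (d†Ω_g)∘J is the Lee form of g;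
  since iρᵇ_{βα} = (dθ)_{βα}, the Bismut Ricci form is of type (1,1) iff this vanishes -/
  dLee20 : Metric → Form2
  /-- iρᵇ_{βα} = (dθ)_{βα}: if dθ is of type (1,1) then so is ρᵇ -/
  bismut_type11_of_dLee : ∀ g, dLee20 g = 0 → IsType11 (bismutRicci g)
  /-- conformal transformation of the Bismut Ricci form when ρᵇ(g) is of type (1,1):
  iρ̃ᵇ_{β̄α} = iρᵇ_{β̄α} + (2−n)∂_{β̄}∂_α f with unchanged (vanishing) (2,0)-part, i.e.
  ρᵇ(e^f g) = ρᵇ(g) + (2−n)·i∂∂̄f -/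
  bismut_conformal : ∀ g f, IsType11 (bismutRicci g) →
    bismutRicci (conformal g f) = bismutRicci g + ((2 : ℝ) - n) • ddbar f
  /-- the restricted holonomy of the Bismut connection of g is contained in SU(n) -/
  BismutHolSU : Metric → Prop
  /-- restricted Bismut holonomy lies in SU(n) iff the Bismut Ricci form vanishes -/
  bismutHolSU_iff : ∀ g, BismutHolSU g ↔ bismutRicci g = 0
  /-- g is a Kähler metric (dΩ_g = 0) -/
  IsKahler : Metric → Prop

attribute [instance] HermitianGeometryB.instTop HermitianGeometryB.instCompact
  HermitianGeometryB.instAdd HermitianGeometryB.instMod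

namespace HermitianGeometryB

variable (s : HermitianGeometryB)

theorem exists_ddbar_eq_bismutRicci (hc1 : s.c1Zero)
    (hddbarLemma : ∀ ω, s.IsExact ω → s.IsType11 ω → ∃ f, ω = s.ddbar f)
    {g : s.Metric} (hdθ : s.dLee20 g = 0) :
    ∃ h, s.bismutRicci g = s.ddbar h :=
  hddbarLemma _ ((s.c1Zero_iff_bismut_exact g).mp hc1) (s.bismut_type11_of_dLee g hdθ)

theorem exists_eq_add_const_of_ddbar_eq {f f' : s.M → ℝ} (h : s.ddbar f = s.ddbar f') :
    ∃ c : ℝ, f' = fun p => f p + c := by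
  obtain ⟨c, hc⟩ := s.ddbar_ker_const (f' - f) (by rw [map_sub, h, sub_self])
  exact ⟨c, funext fun p => by simpa [sub_eq_iff_eq_add'] using congrFun hc p⟩

theorem bismutHolSU_conformal_iff (hn : (s.n : ℝ) ≠ 2) {g : s.Metric}
    (htype : s.IsType11 (s.bismutRicci g)) {h : s.M → ℝ} (hh : s.bismutRicci g = s.ddbar h)
    (f : s.M → ℝ) :
    s.BismutHolSU (s.conformal g f) ↔ s.ddbar f = s.ddbar ((2 - (s.n : ℝ))⁻¹ • -h) := by
  have hk : (2 - (s.n : ℝ)) ≠ 0 := sub_ne_zero.mpr hn.symm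
  rw [s.bismutHolSU_iff, s.bismut_conformal g f htype, hh, map_smul, map_neg,
    eq_inv_smul_iff₀ hk, add_eq_zero_iff_eq_neg']

end HermitianGeometryB

theorem bismut_holonomy_su_of_dLee_type11_general (s : HermitianGeometryB) (hn : 3 ≤ s.n)
    (hc1 : s.c1Zero)
    (hddbarLemma : ∀ ω, s.IsExact ω → s.IsType11 ω → ∃ f, ω = s.ddbar f)
    (g : s.Metric) (hdθ : s.dLee20 g = 0) :
    ∃ f : s.M → ℝ, s.BismutHolSU (s.conformal g f) ∧
      ∀ f' : s.M → ℝ, s.BismutHolSU (s.conformal g f') →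
        ∃ c : ℝ, f' = fun p => f p + c := by
  obtain ⟨h, hh⟩ := s.exists_ddbar_eq_bismutRicci hc1 hddbarLemma hdθ
  have hn2 : (s.n : ℝ) ≠ 2 := by
    have : (3 : ℝ) ≤ s.n := by exact_mod_cast hn
    linarith
  have hsu := s.bismutHolSU_conformal_iff hn2 (s.bismut_type11_of_dLee g hdθ) hh
  exact ⟨_, (hsu _).mpr rfl,
    fun f' hf' => s.exists_eq_add_const_of_ddbar_eq ((hsu f').mp hf').symm⟩

/-- Let (M, J) be a 2n-dimensional compact complex non-Kähler manifold
with c₁(M, J) = 0 and n ≥ 3, satisfying the ∂∂̄-lemma, and let g be a hermitian metric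
compatible with J whose Lee form θ has dθ of type (1,1).  Then there is a conformal
factor f such that the Bismut connection of ḡ = e^f g has restricted holonomy contained
in SU(n) (equivalently, vanishing Bismut Ricci form), and ḡ is unique up to homothety
among the conformal rescalings of g with this property: any other factor differs from f
by a constant. -/
theorem bismut_holonomy_su_of_dLee_type11 (s : HermitianGeometryB) (hn : 3 ≤ s.n)
    (hnonKahler : ∀ g, ¬ s.IsKahler g)
    (hc1 : s.c1Zero)
    (hddbarLemma : ∀ ω, s.IsExact ω → s.IsType11 ω → ∃ f, ω = s.ddbar f)
    (g : s.Metric) (hdθ : s.dLee20 g = 0) :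
    ∃ f : s.M → ℝ, s.BismutHolSU (s.conformal g f) ∧
      ∀ f' : s.M → ℝ, s.BismutHolSU (s.conformal g f') →
        ∃ c : ℝ, f' = fun p => f p + c :=
  bismut_holonomy_su_of_dLee_type11_general s hn hc1 hddbarLemma g hdθ
end
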